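/- arXiv:math/0211142 — 4 statements merged into one kernel-verified Lean document; each statement's English description precedes it below -/
import Mathlib

section
/- If y₁ and y₂ are C⁴ solutions on ℝ of the ODE y''''·(y')² - 3·y'''·y''·y' + 2(1 - n⁻²)·(y'')³ = 0, and there exists a point a such that y₁ is constant on [a, ∞) and y₂ is constant on (-∞, a] with y₁(a) = y₂(a), and moreover y₁ + y₂ - y₁(a) is C⁴ at a, then y₁ + y₂ - y₁(a) is a solution on all of ℝ. -/
/-!
Away from `a` the sum `y₁ + y₂ - y₁ a` coincides near each point with `y₁` (to the left) or
with `y₂` (to the right), so the residual of (B) vanishes there because it only depends on the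
germ of the function. At `a` itself the residual is continuous, since `y` is `C⁴` at `a`, and
vanishes on a punctured neighbourhood, hence vanishes at `a` as well.
-/

open Topology Filter

theorem ContDiffAt.continuousAt_iteratedDeriv {𝕜 F : Type*} [NontriviallyNormedField 𝕜]
    [NormedAddCommGroup F] [NormedSpace 𝕜 F] {f : 𝕜 → F} {x : 𝕜} {n : WithTop ℕ∞} {k : ℕ}
    (hf : ContDiffAt 𝕜 n f x) (hk : k ≤ n) : ContinuousAt (iteratedDeriv k f) x := by
  rw [iteratedDeriv_eq_equiv_comp]
  exact (ContinuousMultilinearMap.piFieldEquiv 𝕜 (Fin k) F).symm.continuous.continuousAt.comp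
    (hf.continuousAt_iteratedFDeriv hk)

theorem ContinuousAt.eq_of_forall_ne {X Y : Type*} [TopologicalSpace X] [TopologicalSpace Y]
    [T2Space Y] {f : X → Y} {a : X} {b : Y} [(𝓝[≠] a).NeBot] (hf : ContinuousAt f a)
    (h : ∀ x ≠ a, f x = b) : f a = b :=
  tendsto_nhds_unique (hf.tendsto.mono_left nhdsWithin_le_nhds)
    (tendsto_const_nhds.congr' ((eventually_nhdsWithin_of_forall (s := {a}ᶜ) h).mono fun _ hx => hx.symm))

/-- Left-hand side of the ODE (B), with `c = 2 (1 - n⁻²)`. -/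
noncomputable def odeBResidual (c : ℝ) (f : ℝ → ℝ) (x : ℝ) : ℝ :=
  iteratedDeriv 4 f x * deriv f x ^ 2
    - 3 * iteratedDeriv 3 f x * iteratedDeriv 2 f x * deriv f x
    + c * iteratedDeriv 2 f x ^ 3

theorem Filter.EventuallyEq.odeBResidual_eq {c x : ℝ} {f g : ℝ → ℝ} (hfg : f =ᶠ[𝓝 x] g) :
    odeBResidual c f x = odeBResidual c g x := by
  have h₁ := hfg.iteratedDeriv_eq 1
  rw [iteratedDeriv_one, iteratedDeriv_one] at h₁
  simp only [odeBResidual, hfg.iteratedDeriv_eq 4, hfg.iteratedDeriv_eq 3,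
    hfg.iteratedDeriv_eq 2, h₁]

theorem ContDiffAt.continuousAt_odeBResidual {c x : ℝ} {f : ℝ → ℝ} (hf : ContDiffAt ℝ 4 f x) :
    ContinuousAt (odeBResidual c f) x := by
  have d₁ := hf.continuousAt_iteratedDeriv (k := 1) (by norm_num)
  have d₂ := hf.continuousAt_iteratedDeriv (k := 2) (by norm_num)
  have d₃ := hf.continuousAt_iteratedDeriv (k := 3) (by norm_num)
  have d₄ := hf.continuousAt_iteratedDeriv (k := 4) le_rfl
  rw [iteratedDeriv_one] at d₁
  unfold odeBResidual
  fun_prop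

theorem odeBResidual_eq_zero_of_pasting {c a : ℝ} {f₁ f₂ g : ℝ → ℝ}
    (h₁ : ∀ x < a, odeBResidual c f₁ x = 0) (h₂ : ∀ x, a < x → odeBResidual c f₂ x = 0)
    (hg₁ : ∀ x ≤ a, g x = f₁ x) (hg₂ : ∀ x, a ≤ x → g x = f₂ x) (hg : ContDiffAt ℝ 4 g a)
    (x : ℝ) : odeBResidual c g x = 0 := by
  have off_a : ∀ x ≠ a, odeBResidual c g x = 0 := by
    intro x hx
    rcases hx.lt_or_gt with hlt | hgt
    · have hg : g =ᶠ[𝓝 x] f₁ :=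
        eventually_of_mem (Iio_mem_nhds hlt) fun z hz => hg₁ z (le_of_lt hz)
      rw [hg.odeBResidual_eq, h₁ x hlt]
    · have hg : g =ᶠ[𝓝 x] f₂ :=
        eventually_of_mem (Ioi_mem_nhds hgt) fun z hz => hg₂ z (le_of_lt hz)
      rw [hg.odeBResidual_eq, h₂ x hgt]
  rcases eq_or_ne x a with rfl | hx
  · exact hg.continuousAt_odeBResidual.eq_of_forall_ne off_a
  · exact off_a x hx

theorem stmt_8_general (n : ℤ) (y₁ y₂ : ℝ → ℝ)
    (hsol₁ : ∀ x, iteratedDeriv 4 y₁ x * deriv y₁ x ^ 2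
        - 3 * iteratedDeriv 3 y₁ x * iteratedDeriv 2 y₁ x * deriv y₁ x
        + 2 * (1 - ((n : ℝ) ^ 2)⁻¹) * iteratedDeriv 2 y₁ x ^ 3 = 0)
    (hsol₂ : ∀ x, iteratedDeriv 4 y₂ x * deriv y₂ x ^ 2
        - 3 * iteratedDeriv 3 y₂ x * iteratedDeriv 2 y₂ x * deriv y₂ x
        + 2 * (1 - ((n : ℝ) ^ 2)⁻¹) * iteratedDeriv 2 y₂ x ^ 3 = 0)
    (a : ℝ)
    (hc₁ : ∀ x, a ≤ x → y₁ x = y₁ a)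
    (hc₂ : ∀ x, x ≤ a → y₂ x = y₂ a)
    (hval : y₁ a = y₂ a)
    (y : ℝ → ℝ) (hy : y = fun x => y₁ x + y₂ x - y₁ a)
    (hC4 : ContDiffAt ℝ 4 y a) :
    ∀ x, iteratedDeriv 4 y x * deriv y x ^ 2
        - 3 * iteratedDeriv 3 y x * iteratedDeriv 2 y x * deriv y x
        + 2 * (1 - ((n : ℝ) ^ 2)⁻¹) * iteratedDeriv 2 y x ^ 3 = 0 := by
  have hy₁ : ∀ x ≤ a, y x = y₁ x := fun x hx => by simp [hy, hc₂ x hx, hval]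
  have hy₂ : ∀ x, a ≤ x → y x = y₂ x := fun x hx => by simp [hy, hc₁ x hx, hval]
  exact odeBResidual_eq_zero_of_pasting (fun x _ => hsol₁ x) (fun x _ => hsol₂ x) hy₁ hy₂ hC4

theorem stmt_8 (n : ℤ) (hn : 3 < n) (y₁ y₂ : ℝ → ℝ)
    (hy₁ : ContDiff ℝ 4 y₁) (hy₂ : ContDiff ℝ 4 y₂)
    (hsol₁ : ∀ x, iteratedDeriv 4 y₁ x * deriv y₁ x ^ 2
        - 3 * iteratedDeriv 3 y₁ x * iteratedDeriv 2 y₁ x * deriv y₁ x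
        + 2 * (1 - ((n : ℝ) ^ 2)⁻¹) * iteratedDeriv 2 y₁ x ^ 3 = 0)
    (hsol₂ : ∀ x, iteratedDeriv 4 y₂ x * deriv y₂ x ^ 2
        - 3 * iteratedDeriv 3 y₂ x * iteratedDeriv 2 y₂ x * deriv y₂ x
        + 2 * (1 - ((n : ℝ) ^ 2)⁻¹) * iteratedDeriv 2 y₂ x ^ 3 = 0)
    (a : ℝ)
    (hc₁ : ∀ x, a ≤ x → y₁ x = y₁ a)
    (hc₂ : ∀ x, x ≤ a → y₂ x = y₂ a)
    (hval : y₁ a = y₂ a)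
    (y : ℝ → ℝ) (hy : y = fun x => y₁ x + y₂ x - y₁ a)
    (hC4 : ContDiffAt ℝ 4 y a) :
    ∀ x, iteratedDeriv 4 y x * deriv y x ^ 2
        - 3 * iteratedDeriv 3 y x * iteratedDeriv 2 y x * deriv y x
        + 2 * (1 - ((n : ℝ) ^ 2)⁻¹) * iteratedDeriv 2 y x ^ 3 = 0 :=
  stmt_8_general n y₁ y₂ hsol₁ hsol₂ a hc₁ hc₂ hval y hy hC4
end

section
/- Let φ : ℝ → ℝ be continuous and ε : ℝ → ℝ continuous with ε(t) > 0 for all t. Suppose S is a set of functions ℝ → ℝ such that for every a < b and every pair of values u, v ∈ ℝ there exists f ∈ S with f constant equal to u on (-∞, a], constant equal to v on [b, ∞), and monotone between u and v on [a, b]; suppose moreover S is closed under the pasting operation of the previous lemmas. Then there exists a function y obtained by pasting countably many elements of S such that |y(t) - φ(t)| < ε(t) for all t ∈ ℝ. -/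
open Set Filter

private lemma bump_abs_lt {u v w z r : ℝ} (hw : w ∈ Set.uIcc u v)
    (hu : |u - z| < r) (hv : |v - z| < r) : |w - z| < r := by
  rw [abs_sub_lt_iff] at *
  rcases le_total u v with h | h
  · rw [Set.uIcc_of_le h, Set.mem_Icc] at hw
    exact ⟨by linarith [hw.2], by linarith [hw.1]⟩
  · rw [Set.uIcc_of_ge h, Set.mem_Icc] at hw
    exact ⟨by linarith [hw.2], by linarith [hw.1]⟩

/-- fineness predicate: on the symmetric interval of radius `d` around `x`,
the oscillation of `φ` is smaller than every value of `ε`. -/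
def RubelP (φ ε : ℝ → ℝ) (x d : ℝ) : Prop :=
  0 < d ∧ d ≤ 1 ∧ ∀ s ∈ Icc (x - d) (x + d), ∀ s' ∈ Icc (x - d) (x + d),
    ∀ u ∈ Icc (x - d) (x + d), |φ s - φ s'| < ε u

lemma RubelP.mono {φ ε : ℝ → ℝ} {x d d' : ℝ} (h : RubelP φ ε x d)
    (h0 : 0 < d') (h1 : d' ≤ d) : RubelP φ ε x d' := by
  obtain ⟨hd, hd1, h⟩ := h
  refine ⟨h0, h1.trans hd1, fun s hs s' hs' u hu => ?_⟩
  have sub : Icc (x - d') (x + d') ⊆ Icc (x - d) (x + d) :=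
    Icc_subset_Icc (by linarith) (by linarith)
  exact h s (sub hs) s' (sub hs') u (sub hu)

lemma rubel_exists_uniform {φ ε : ℝ → ℝ} (hφ : Continuous φ) (hε : Continuous ε)
    (hεpos : ∀ t, 0 < ε t) (x : ℝ) :
    ∃ d, 0 < d ∧ d ≤ 1 ∧ ∀ y ∈ Icc (x - 1) (x + 1), RubelP φ ε y d := by
  have hK : IsCompact (Icc (x - 2) (x + 2)) := isCompact_Icc
  obtain ⟨z, hz, hzmin⟩ := hK.exists_isMinOn
    ⟨x, by constructor <;> linarith⟩ hε.continuousOn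
  have hm : 0 < ε z := hεpos z
  have huc : UniformContinuousOn φ (Icc (x - 2) (x + 2)) :=
    hK.uniformContinuousOn_of_continuous hφ.continuousOn
  rw [Metric.uniformContinuousOn_iff] at huc
  obtain ⟨δ, hδ, hδc⟩ := huc (ε z) hm
  refine ⟨min (δ / 3) 1, by positivity, min_le_right _ _, fun y hy => ?_⟩
  set d := min (δ / 3) 1 with hd
  have hd1 : d ≤ 1 := min_le_right _ _
  have hdδ : d ≤ δ / 3 := min_le_left _ _
  have hd0 : 0 < d := by positivity
  rw [mem_Icc] at hy
  have sub : Icc (y - d) (y + d) ⊆ Icc (x - 2) (x + 2) :=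
    Icc_subset_Icc (by linarith) (by linarith)
  refine ⟨hd0, hd1, fun s hs s' hs' u hu => ?_⟩
  have h1 := sub hs
  have h2 := sub hs'
  have h3 := sub hu
  rw [mem_Icc] at hs hs'
  have hlt : dist (φ s) (φ s') < ε z := by
    apply hδc s h1 s' h2
    rw [Real.dist_eq, abs_sub_lt_iff]
    constructor <;> linarith
  rw [Real.dist_eq] at hlt
  exact hlt.trans_le (isMinOn_iff.1 hzmin u h3)

noncomputable def rubelD (φ ε : ℝ → ℝ) (x : ℝ) : ℝ := sSup {d | RubelP φ ε x d}

lemma rubelD_bdd (φ ε : ℝ → ℝ) (x : ℝ) : BddAbove {d | RubelP φ ε x d} :=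
  ⟨1, fun d hd => hd.2.1⟩

lemma rubelD_lower {φ ε : ℝ → ℝ} {x d : ℝ} (h : RubelP φ ε x d) : d ≤ rubelD φ ε x :=
  le_csSup (rubelD_bdd φ ε x) h

lemma rubelD_pos {φ ε : ℝ → ℝ} (hφ : Continuous φ) (hε : Continuous ε)
    (hεpos : ∀ t, 0 < ε t) (x : ℝ) : 0 < rubelD φ ε x := by
  obtain ⟨d, hd0, hd1, hd⟩ := rubel_exists_uniform hφ hε hεpos x
  have := rubelD_lower (hd x (by rw [mem_Icc]; constructor <;> linarith))
  linarith

lemma rubelP_half {φ ε : ℝ → ℝ} (hφ : Continuous φ) (hε : Continuous ε)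
    (hεpos : ∀ t, 0 < ε t) (x : ℝ) : RubelP φ ε x (rubelD φ ε x / 2) := by
  have hpos := rubelD_pos hφ hε hεpos x
  have hne : {d | RubelP φ ε x d}.Nonempty := by
    obtain ⟨d, hd0, hd1, hd⟩ := rubel_exists_uniform hφ hε hεpos x
    exact ⟨d, hd x (by rw [mem_Icc]; constructor <;> linarith)⟩
  obtain ⟨d, hdmem, hltd⟩ := exists_lt_of_lt_csSup hne (half_lt_self hpos)
  exact hdmem.mono (by linarith) hltd.le

noncomputable def rubelT (φ ε : ℝ → ℝ) : ℕ → ℝ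
  | 0 => 0
  | n + 1 => rubelT φ ε n + rubelD φ ε (rubelT φ ε n) / 2

noncomputable def rubelTm (φ ε : ℝ → ℝ) : ℕ → ℝ
  | 0 => 0
  | n + 1 => rubelTm φ ε n - rubelD φ ε (rubelTm φ ε n) / 2

noncomputable def rubelGrid (φ ε : ℝ → ℝ) (k : ℤ) : ℝ :=
  if 0 ≤ k then rubelT φ ε k.toNat else rubelTm φ ε (-k).toNat

lemma rubelGrid_zero (φ ε : ℝ → ℝ) : rubelGrid φ ε 0 = 0 := by
  simp [rubelGrid, rubelT]

lemma rubelGrid_neg (φ ε : ℝ → ℝ) {k : ℤ} (hk : k ≤ 0) :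
    rubelGrid φ ε k = rubelTm φ ε (-k).toNat := by
  rcases hk.lt_or_eq with h | h
  · rw [rubelGrid, if_neg (by omega)]
  · subst h; simp [rubelGrid, rubelT, rubelTm]

lemma rubelGrid_natCast (φ ε : ℝ → ℝ) (n : ℕ) : rubelGrid φ ε (n : ℤ) = rubelT φ ε n := by
  rw [rubelGrid, if_pos (Int.natCast_nonneg n)]
  simp

lemma rubelGrid_neg_natCast (φ ε : ℝ → ℝ) (n : ℕ) :
    rubelGrid φ ε (-(n : ℤ)) = rubelTm φ ε n := by
  rw [rubelGrid_neg φ ε (by omega)]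
  simp

lemma rubelGrid_lt_succ {φ ε : ℝ → ℝ} (hφ : Continuous φ) (hε : Continuous ε)
    (hεpos : ∀ t, 0 < ε t) (k : ℤ) : rubelGrid φ ε k < rubelGrid φ ε (k + 1) := by
  rcases le_or_gt 0 k with hk | hk
  · rw [rubelGrid, if_pos hk, rubelGrid, if_pos (by omega)]
    have h : (k + 1).toNat = k.toNat + 1 := by omega
    rw [h, rubelT]
    have := rubelD_pos hφ hε hεpos (rubelT φ ε k.toNat)
    linarith
  · rw [rubelGrid_neg φ ε (by omega : k ≤ 0), rubelGrid_neg φ ε (by omega : k + 1 ≤ 0)]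
    have h1 : (-k).toNat = (-(k + 1)).toNat + 1 := by omega
    rw [h1, rubelTm]
    have := rubelD_pos hφ hε hεpos (rubelTm φ ε (-(k + 1)).toNat)
    linarith

lemma rubelT_tendsto {φ ε : ℝ → ℝ} (hφ : Continuous φ) (hε : Continuous ε)
    (hεpos : ∀ t, 0 < ε t)
    (huni : ∀ x : ℝ, ∃ c > 0, ∀ y ∈ Icc (x - 1) (x + 1), c ≤ rubelD φ ε y) :
    Tendsto (rubelT φ ε) atTop atTop := by
  have hmono : Monotone (rubelT φ ε) := by
    apply monotone_nat_of_le_succ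
    intro n
    have := rubelD_pos hφ hε hεpos (rubelT φ ε n)
    rw [rubelT]; linarith
  rcases tendsto_of_monotone hmono with h | h
  · exact h
  · exfalso
    obtain ⟨L, hL⟩ := h
    have hle : ∀ n, rubelT φ ε n ≤ L := fun n => hmono.ge_of_tendsto hL n
    obtain ⟨c, hc0, hc⟩ := huni L
    set c' := min c 1 with hc'
    have hc'0 : 0 < c' := by positivity
    have hc'1 : c' ≤ 1 := min_le_right _ _
    obtain ⟨n, hn⟩ : ∃ n, L - c' / 2 < rubelT φ ε n := by
      by_contra hcon
      push_neg at hcon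
      have := le_of_tendsto hL (Eventually.of_forall hcon)
      linarith
    have hmem : rubelT φ ε n ∈ Icc (L - 1) (L + 1) := by
      rw [mem_Icc]
      exact ⟨by linarith, by linarith [hle n]⟩
    have hD : c ≤ rubelD φ ε (rubelT φ ε n) := hc _ hmem
    have hcc : c' ≤ c := min_le_left _ _
    linarith [hle (n + 1),
      (by rw [rubelT] : rubelT φ ε (n + 1) = rubelT φ ε n + rubelD φ ε (rubelT φ ε n) / 2)]

lemma rubelTm_tendsto {φ ε : ℝ → ℝ} (hφ : Continuous φ) (hε : Continuous ε)
    (hεpos : ∀ t, 0 < ε t)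
    (huni : ∀ x : ℝ, ∃ c > 0, ∀ y ∈ Icc (x - 1) (x + 1), c ≤ rubelD φ ε y) :
    Tendsto (rubelTm φ ε) atTop atBot := by
  have hanti : Antitone (rubelTm φ ε) := by
    apply antitone_nat_of_succ_le
    intro n
    have := rubelD_pos hφ hε hεpos (rubelTm φ ε n)
    rw [rubelTm]; linarith
  rcases tendsto_of_antitone hanti with h | h
  · exact h
  · exfalso
    obtain ⟨L, hL⟩ := h
    have hle : ∀ n, L ≤ rubelTm φ ε n := fun n => hanti.le_of_tendsto hL n
    obtain ⟨c, hc0, hc⟩ := huni L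
    set c' := min c 1 with hc'
    have hc'0 : 0 < c' := by positivity
    have hc'1 : c' ≤ 1 := min_le_right _ _
    obtain ⟨n, hn⟩ : ∃ n, rubelTm φ ε n < L + c' / 2 := by
      by_contra hcon
      push_neg at hcon
      have := ge_of_tendsto hL (Eventually.of_forall hcon)
      linarith
    have hmem : rubelTm φ ε n ∈ Icc (L - 1) (L + 1) := by
      rw [mem_Icc]
      exact ⟨by linarith [hle n], by linarith⟩
    have hD : c ≤ rubelD φ ε (rubelTm φ ε n) := hc _ hmem
    have hcc : c' ≤ c := min_le_left _ _
    have hstep : rubelTm φ ε (n + 1) = rubelTm φ ε n - rubelD φ ε (rubelTm φ ε n) / 2 := by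
      rw [rubelTm]
    linarith [hle (n + 1)]

lemma rubelGrid_fine {φ ε : ℝ → ℝ} (hφ : Continuous φ) (hε : Continuous ε)
    (hεpos : ∀ t, 0 < ε t) (k : ℤ) :
    ∀ s ∈ Icc (rubelGrid φ ε k) (rubelGrid φ ε (k + 1)),
    ∀ s' ∈ Icc (rubelGrid φ ε k) (rubelGrid φ ε (k + 1)),
    ∀ u ∈ Icc (rubelGrid φ ε k) (rubelGrid φ ε (k + 1)), |φ s - φ s'| < ε u := by
  rcases le_or_gt 0 k with hk | hk
  · have e1 : rubelGrid φ ε k = rubelT φ ε k.toNat := by rw [rubelGrid, if_pos hk]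
    have e2 : rubelGrid φ ε (k + 1)
        = rubelT φ ε k.toNat + rubelD φ ε (rubelT φ ε k.toNat) / 2 := by
      rw [rubelGrid, if_pos (by omega)]
      have h : (k + 1).toNat = k.toNat + 1 := by omega
      rw [h, rubelT]
    obtain ⟨hd0, hd1, hP⟩ := rubelP_half hφ hε hεpos (rubelT φ ε k.toNat)
    set x0 := rubelT φ ε k.toNat
    intro s hs s' hs' u hu
    rw [e1, e2] at hs hs' hu
    have sub : Icc x0 (x0 + rubelD φ ε x0 / 2)
        ⊆ Icc (x0 - rubelD φ ε x0 / 2) (x0 + rubelD φ ε x0 / 2) :=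
      Icc_subset_Icc (by linarith) le_rfl
    exact hP s (sub hs) s' (sub hs') u (sub hu)
  · set n := (-(k + 1)).toNat with hn
    have e2 : rubelGrid φ ε (k + 1) = rubelTm φ ε n := by
      rw [rubelGrid_neg φ ε (by omega : k + 1 ≤ 0)]
    have e1 : rubelGrid φ ε k = rubelTm φ ε n - rubelD φ ε (rubelTm φ ε n) / 2 := by
      rw [rubelGrid_neg φ ε (by omega : k ≤ 0)]
      have h : (-k).toNat = n + 1 := by omega
      rw [h, rubelTm]
    obtain ⟨hd0, hd1, hP⟩ := rubelP_half hφ hε hεpos (rubelTm φ ε n)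
    set x0 := rubelTm φ ε n
    intro s hs s' hs' u hu
    rw [e1, e2] at hs hs' hu
    have sub : Icc (x0 - rubelD φ ε x0 / 2) x0
        ⊆ Icc (x0 - rubelD φ ε x0 / 2) (x0 + rubelD φ ε x0 / 2) :=
      Icc_subset_Icc le_rfl (by linarith)
    exact hP s (sub hs) s' (sub hs') u (sub hu)

lemma rubel_tele (F : ℤ → ℝ) (a : ℤ) :
    ∀ n : ℕ, ∑ k ∈ Finset.Ico a (a + n), (F (k + 1) - F k) = F (a + n) - F a := by
  intro n
  induction n with
  | zero => simp
  | succ n ih =>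
    have h : Finset.Ico a (a + ((n : ℤ) + 1)) = insert (a + n) (Finset.Ico a (a + n)) := by
      ext k
      simp only [Finset.mem_Ico, Finset.mem_insert]
      omega
    push_cast
    rw [h, Finset.sum_insert (by simp [Finset.mem_Ico])]
    push_cast at ih
    rw [ih]
    ring_nf

set_option maxHeartbeats 1000000 in
theorem stmt_12 (φ ε : ℝ → ℝ) (hφ : Continuous φ) (hε : Continuous ε)
    (hεpos : ∀ t, 0 < ε t) (S : Set (ℝ → ℝ))
    (hS : ∀ a b : ℝ, a < b → ∀ u v : ℝ, ∃ f ∈ S,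
      (∀ x ≤ a, f x = u) ∧ (∀ x, b ≤ x → f x = v) ∧ (∀ x, f x ∈ Set.uIcc u v) ∧
      ((u ≤ v → Monotone f) ∧ (v ≤ u → Antitone f))) :
    ∃ (f : ℕ → ℝ → ℝ) (c : ℕ → ℝ) (y : ℝ → ℝ),
      (∀ i, f i ∈ S) ∧
      (∀ t, HasSum (fun i => f i t - c i) (y t)) ∧
      (∀ t, |y t - φ t| < ε t) := by
  classical
  have huni : ∀ x : ℝ, ∃ c > 0, ∀ y ∈ Icc (x - 1) (x + 1), c ≤ rubelD φ ε y := by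
    intro x
    obtain ⟨d, hd0, hd1, hd⟩ := rubel_exists_uniform hφ hε hεpos x
    exact ⟨d, hd0, fun y hy => rubelD_lower (hd y hy)⟩
  set t : ℤ → ℝ := rubelGrid φ ε with ht
  have hlt : ∀ k : ℤ, t k < t (k + 1) := rubelGrid_lt_succ hφ hε hεpos
  have hmono : StrictMono t := strictMono_int_of_lt_succ hlt
  have hfine : ∀ k : ℤ, ∀ s ∈ Icc (t k) (t (k + 1)), ∀ s' ∈ Icc (t k) (t (k + 1)),
      ∀ u ∈ Icc (t k) (t (k + 1)), |φ s - φ s'| < ε u := rubelGrid_fine hφ hε hεpos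
  -- index of a point
  have hidx : ∀ x : ℝ, ∃ m : ℤ, t m ≤ x ∧ x < t (m + 1) := by
    intro x
    have hbdd : ∃ b : ℤ, ∀ z : ℤ, t z ≤ x → z ≤ b := by
      obtain ⟨n, hn⟩ := ((rubelT_tendsto hφ hε hεpos huni).eventually_gt_atTop x).exists
      refine ⟨(n : ℤ), fun z hz => ?_⟩
      by_contra hcon
      push_neg at hcon
      have h1 : t (n : ℤ) < t z := hmono hcon
      have h2 : t (n : ℤ) = rubelT φ ε n := rubelGrid_natCast φ ε n
      linarith [h2 ▸ h1]
    have hinh : ∃ z : ℤ, t z ≤ x := by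
      obtain ⟨n, hn⟩ := ((rubelTm_tendsto hφ hε hεpos huni).eventually_le_atBot x).exists
      exact ⟨-(n : ℤ), by rw [ht]; rw [rubelGrid_neg_natCast φ ε n]; exact hn⟩
    obtain ⟨m, hm, hub⟩ := Int.exists_greatest_of_bdd
      (P := fun z => t z ≤ x) (by obtain ⟨b, hb⟩ := hbdd; exact ⟨b, hb⟩) hinh
    refine ⟨m, hm, ?_⟩
    by_contra hcon
    push_neg at hcon
    have := hub (m + 1) hcon
    omega
  choose idx h1 h2 using hidx
  -- the step modules
  choose g hgS hgl hgr hgm hgmono using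
    fun k : ℤ => hS (t k) (t (k + 1)) (hlt k) (φ (t k)) (φ (t (k + 1)))
  -- the enumeration of ℤ
  let e : ℕ ≃ ℤ := (Denumerable.eqv ℤ).symm
  -- the coefficients
  let c' : ℤ → ℝ := fun k => if k = 0 then 0 else if 0 ≤ k then φ (t k) else φ (t (k + 1))
  refine ⟨fun n => g (e n), fun n => c' (e n), fun x => g (idx x) x, ?_, ?_, ?_⟩
  · intro i
    exact hgS (e i)
  · intro x
    have hx1 : t (idx x) ≤ x := h1 x
    have hx2 : x < t (idx x + 1) := h2 x
    set m := idx x with hmdef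
    set T : ℤ → ℝ := fun k => g k x - c' k with hTdef
    set T0 : ℤ → ℝ := fun k => g k x - (if 0 ≤ k then φ (t k) else φ (t (k + 1))) with hT0def
    have hTT0 : ∀ k, T k = T0 k + (if k = 0 then φ (t 0) else 0) := by
      intro k
      by_cases hk0 : k = 0
      · subst hk0
        show g 0 x - c' 0 = (g 0 x - _) + _
        rw [if_pos rfl, if_pos le_rfl]
        simp only [c', if_pos rfl]
        ring
      · show g k x - c' k = (g k x - _) + _
        rw [if_neg hk0]
        simp only [c', if_neg hk0]
        ring
    have hT0z : ∀ k ∉ Finset.Icc (min m 0) (max m 0), T0 k = 0 := by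
      intro k hk
      rw [Finset.mem_Icc] at hk
      push_neg at hk
      have hmax : (0 : ℤ) ≤ max m 0 := le_max_right m 0
      have hmin : min m 0 ≤ m := min_le_left m 0
      have hmin0 : min m 0 ≤ 0 := min_le_right m 0
      have hmaxm : m ≤ max m 0 := le_max_left m 0
      rcases le_or_gt 0 k with h0k | h0k
      · have hmk : m < k := by
          have := hk (le_trans hmin0 h0k)
          omega
        have hxk : x ≤ t k := le_trans hx2.le (hmono.monotone (by omega))
        show g k x - _ = 0
        rw [if_pos h0k, hgl k x hxk]
        ring
      · have hkm : k < m := by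
          by_contra hcon
          push_neg at hcon
          have hge : min m 0 ≤ k := le_trans hmin hcon
          have := hk hge
          omega
        have hxk : t (k + 1) ≤ x := le_trans (hmono.monotone (by omega : k + 1 ≤ m)) hx1
        show g k x - _ = 0
        rw [if_neg (not_le.2 h0k), hgr k x hxk]
        ring
    have hTz : ∀ k ∉ Finset.Icc (min m 0) (max m 0), T k = 0 := by
      intro k hk
      have hk0 : k ≠ 0 := by
        intro hzero
        subst hzero
        rw [Finset.mem_Icc] at hk
        exact hk ⟨min_le_right m 0, le_max_right m 0⟩
      rw [hTT0, if_neg hk0, add_zero]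
      exact hT0z k hk
    have hsum := hasSum_sum_of_ne_finset_zero (L := SummationFilter.unconditional ℤ) hTz
    have hval0 : ∑ k ∈ Finset.Icc (min m 0) (max m 0), T0 k = g m x - φ (t 0) := by
      rcases le_or_gt 0 m with hm0 | hm0
      · rw [min_eq_right hm0, max_eq_left hm0]
        rw [← Finset.Ico_insert_right hm0, Finset.sum_insert Finset.right_notMem_Ico]
        have hcongr : ∑ k ∈ Finset.Ico 0 m, T0 k
            = ∑ k ∈ Finset.Ico 0 m, (φ (t (k + 1)) - φ (t k)) := by
          refine Finset.sum_congr rfl fun k hk => ?_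
          rw [Finset.mem_Ico] at hk
          show g k x - _ = _
          rw [if_pos hk.1, hgr k x (le_trans (hmono.monotone (by omega : k + 1 ≤ m)) hx1)]
        have htel1 := rubel_tele (fun k => φ (t k)) 0 m.toNat
        have hmm : (m.toNat : ℤ) = m := Int.toNat_of_nonneg hm0
        rw [zero_add, hmm] at htel1
        rw [hcongr, htel1]
        have hTm : T0 m = g m x - φ (t m) := by
          show g m x - _ = _
          rw [if_pos hm0]
        rw [hTm]
        ring
      · rw [min_eq_left hm0.le, max_eq_right hm0.le]
        have hsplit : Finset.Icc m 0 = insert m (insert 0 (Finset.Icc (m + 1) (-1))) := by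
          ext k
          simp only [Finset.mem_Icc, Finset.mem_insert]
          omega
        rw [hsplit, Finset.sum_insert (by simp only [Finset.mem_insert, Finset.mem_Icc]; omega),
          Finset.sum_insert (by simp only [Finset.mem_Icc]; omega)]
        have hT00 : T0 0 = 0 := by
          show g 0 x - _ = 0
          have hx0 : x ≤ t 0 := le_trans hx2.le (hmono.monotone (by omega : m + 1 ≤ 0))
          rw [if_pos le_rfl, hgl 0 x hx0]
          ring
        have hTm : T0 m = g m x - φ (t (m + 1)) := by
          show g m x - _ = _
          rw [if_neg (not_le.2 hm0)]
        have hcongr : ∑ k ∈ Finset.Icc (m + 1) (-1), T0 k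
            = ∑ k ∈ Finset.Icc (m + 1) (-1), (-(φ (t (k + 1)) - φ (t k))) := by
          refine Finset.sum_congr rfl fun k hk => ?_
          rw [Finset.mem_Icc] at hk
          show g k x - _ = _
          have hxk : x ≤ t k := le_trans hx2.le (hmono.monotone (by omega : m + 1 ≤ k))
          rw [if_neg (by omega), hgl k x hxk]
          ring
        have hico : Finset.Icc (m + 1) (-1) = Finset.Ico (m + 1) 0 := by
          ext k
          simp only [Finset.mem_Icc, Finset.mem_Ico]
          omega
        have htel := rubel_tele (fun k => φ (t k)) (m + 1) (-(m + 1)).toNat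
        have hmm : (m + 1) + ((-(m + 1)).toNat : ℤ) = 0 := by omega
        rw [hmm] at htel
        rw [hcongr, Finset.sum_neg_distrib, hico, htel, hTm, hT00]
        ring
    have hval : ∑ k ∈ Finset.Icc (min m 0) (max m 0), T k = g m x := by
      have h0mem : (0 : ℤ) ∈ Finset.Icc (min m 0) (max m 0) := by
        rw [Finset.mem_Icc]
        exact ⟨min_le_right m 0, le_max_right m 0⟩
      calc ∑ k ∈ Finset.Icc (min m 0) (max m 0), T k
          = ∑ k ∈ Finset.Icc (min m 0) (max m 0),
              (T0 k + (if k = 0 then φ (t 0) else 0)) :=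
            Finset.sum_congr rfl fun k _ => hTT0 k
        _ = (∑ k ∈ Finset.Icc (min m 0) (max m 0), T0 k)
              + ∑ k ∈ Finset.Icc (min m 0) (max m 0), (if k = 0 then φ (t 0) else 0) :=
            Finset.sum_add_distrib
        _ = (g m x - φ (t 0)) + φ (t 0) := by
            rw [hval0, Finset.sum_ite_eq' _ (0 : ℤ) (fun _ => φ (t 0)), if_pos h0mem]
        _ = g m x := by ring
    rw [hval] at hsum
    exact (Equiv.hasSum_iff e (f := T)).2 hsum
  · intro x
    have hx1 : t (idx x) ≤ x := h1 x
    have hx2 : x < t (idx x + 1) := h2 x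
    have hmm : x ∈ Icc (t (idx x)) (t (idx x + 1)) := ⟨hx1, hx2.le⟩
    have hu : |φ (t (idx x)) - φ x| < ε x :=
      hfine (idx x) (t (idx x)) ⟨le_rfl, (hlt (idx x)).le⟩ x hmm x hmm
    have hv : |φ (t (idx x + 1)) - φ x| < ε x :=
      hfine (idx x) (t (idx x + 1)) ⟨(hlt (idx x)).le, le_rfl⟩ x hmm x hmm
    exact bump_abs_lt (hgm (idx x) x) hu hv
end

section
/- Let C, S, D satisfy the Jacobi system S' = C·D, C' = -S·D, D' = -(1/2)·S·C with S(0) = 0, C(0) = 1, D(0) = 1. Then there exists K > 0 such that C(K) = 0 and C(x) > 0 for all x ∈ [0, K). -/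
/-! The quantities `S² + C²` and `D² + m S²` are conserved, so `D² ≥ 1 - m > 0` and `D`, starting
at `1`, stays above `√(1 - m)`. If `C` stayed positive on `[0, ∞)`, then `S' = C D > 0` would make
`S` increase, so `C' = -S D ≤ -S(1) √(1 - m)` on `[1, ∞)` would force `C` below zero. The wanted
`K` is the least nonnegative zero of `C`. -/

open Set

theorem exists_first_zero_of_continuousOn {f : ℝ → ℝ} {a z : ℝ} (haz : a ≤ z)
    (hf : ContinuousOn f (Icc a z)) (ha : 0 < f a) (hz : f z ≤ 0) :
    ∃ K > a, f K = 0 ∧ ∀ x ∈ Ico a K, 0 < f x := by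
  have zero_below : ∀ x ∈ Icc a z, f x ≤ 0 → ∃ c ∈ Icc a x, f c = 0 := fun x hx hfx =>
    intermediate_value_Icc' hx.1 (hf.mono (Icc_subset_Icc_right hx.2)) ⟨hfx, ha.le⟩
  set A := Icc a z ∩ f ⁻¹' {0}
  have hA : IsClosed A := hf.preimage_isClosed_of_isClosed isClosed_Icc isClosed_singleton
  have hA_bdd : BddBelow A := ⟨a, fun x hx => hx.1.1⟩
  obtain ⟨c, hc, hfc⟩ := zero_below z (right_mem_Icc.2 haz) hz
  have hK : sInf A ∈ A := hA.csInf_mem ⟨c, hc, hfc⟩ hA_bdd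
  refine ⟨sInf A, lt_of_le_of_ne hK.1.1 ?_, hK.2, fun x hx => ?_⟩
  · intro hKa
    exact ha.ne' (hKa ▸ hK.2)
  · by_contra! hfx
    have hxz : x ∈ Icc a z := ⟨hx.1, hx.2.le.trans hK.1.2⟩
    obtain ⟨c, hc, hfc⟩ := zero_below x hxz hfx
    have : sInf A ≤ c := csInf_le hA_bdd ⟨⟨hc.1, hc.2.trans hxz.2⟩, hfc⟩
    linarith [hx.2, hc.2]

theorem eq_of_hasDerivAt_eq_zero {f : ℝ → ℝ} (hf : ∀ x, HasDerivAt f 0 x) (x y : ℝ) :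
    f x = f y :=
  is_const_of_deriv_eq_zero (fun x => (hf x).differentiableAt) (fun x => (hf x).deriv) x y

/-- `S, C, D` are the Jacobi elliptic functions `sn, cn, dn` of parameter `m`. -/
structure IsJacobiSystem (m : ℝ) (S C D : ℝ → ℝ) : Prop where
  hasDerivAt_S : ∀ x, HasDerivAt S (C x * D x) x
  hasDerivAt_C : ∀ x, HasDerivAt C (-(S x * D x)) x
  hasDerivAt_D : ∀ x, HasDerivAt D (-(m * (S x * C x))) x
  S_zero : S 0 = 0
  C_zero : C 0 = 1
  D_zero : D 0 = 1

namespace IsJacobiSystem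

variable {m : ℝ} {S C D : ℝ → ℝ}

theorem continuous_C (h : IsJacobiSystem m S C D) : Continuous C :=
  continuous_iff_continuousAt.2 fun x => (h.hasDerivAt_C x).continuousAt

theorem continuous_D (h : IsJacobiSystem m S C D) : Continuous D :=
  continuous_iff_continuousAt.2 fun x => (h.hasDerivAt_D x).continuousAt

theorem sq_S_add_sq_C (h : IsJacobiSystem m S C D) (x : ℝ) : S x ^ 2 + C x ^ 2 = 1 := by
  have hderiv : ∀ x, HasDerivAt (fun y => S y ^ 2 + C y ^ 2) 0 x := fun x => by
    refine (((h.hasDerivAt_S x).pow 2).add ((h.hasDerivAt_C x).pow 2)).congr_deriv ?_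
    ring
  simpa [h.S_zero, h.C_zero] using eq_of_hasDerivAt_eq_zero hderiv x 0

theorem sq_D_add_mul_sq_S (h : IsJacobiSystem m S C D) (x : ℝ) :
    D x ^ 2 + m * S x ^ 2 = 1 := by
  have hderiv : ∀ x, HasDerivAt (fun y => D y ^ 2 + m * S y ^ 2) 0 x := fun x => by
    refine (((h.hasDerivAt_D x).pow 2).add
      (((h.hasDerivAt_S x).pow 2).const_mul m)).congr_deriv ?_
    ring
  simpa [h.S_zero, h.D_zero] using eq_of_hasDerivAt_eq_zero hderiv x 0

theorem one_sub_le_sq_D (h : IsJacobiSystem m S C D) (hm : 0 ≤ m) (x : ℝ) :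
    1 - m ≤ D x ^ 2 := by
  nlinarith [h.sq_S_add_sq_C x, h.sq_D_add_mul_sq_S x, sq_nonneg (C x)]

theorem sqrt_one_sub_le_D (h : IsJacobiSystem m S C D) (hm₀ : 0 ≤ m) (hm₁ : m < 1) (x : ℝ) :
    √(1 - m) ≤ D x := by
  have hD_pos : 0 < D x := by
    by_contra! hDx
    obtain ⟨c, -, hc⟩ := intermediate_value_uIcc h.continuous_D.continuousOn
      (mem_uIcc.2 (Or.inr ⟨hDx, h.D_zero ▸ zero_le_one⟩))
    linarith [h.one_sub_le_sq_D hm₀ c, sq_eq_zero_iff.2 hc]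
  exact Real.sqrt_le_iff.2 ⟨hD_pos.le, h.one_sub_le_sq_D hm₀ x⟩

theorem exists_nonneg_C_nonpos (h : IsJacobiSystem m S C D) (hm₀ : 0 ≤ m) (hm₁ : m < 1) :
    ∃ z, 0 ≤ z ∧ C z ≤ 0 := by
  by_contra! hC_pos
  have hS_mono : StrictMonoOn S (Ici 0) := by
    refine strictMonoOn_of_deriv_pos (convex_Ici 0)
      (fun x _ => (h.hasDerivAt_S x).continuousAt.continuousWithinAt) fun x hx => ?_
    rw [interior_Ici] at hx
    rw [(h.hasDerivAt_S x).deriv]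
    exact mul_pos (hC_pos x (le_of_lt hx))
      ((Real.sqrt_pos.2 (by linarith)).trans_le (h.sqrt_one_sub_le_D hm₀ hm₁ x))
  have hS₁ : 0 < S 1 := h.S_zero ▸ hS_mono self_mem_Ici (mem_Ici.2 zero_le_one) one_pos
  set b := S 1 * √(1 - m)
  have hb : 0 < b := mul_pos hS₁ (Real.sqrt_pos.2 (by linarith))
  have hC_decay : ∀ y, 1 ≤ y → C y - C 1 ≤ -b * (y - 1) := fun y hy =>
    (convex_Ici 1).image_sub_le_mul_sub_of_deriv_le h.continuous_C.continuousOn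
      (fun x _ => (h.hasDerivAt_C x).differentiableAt.differentiableWithinAt)
      (fun x hx => by
        rw [interior_Ici] at hx
        have hS_ge : S 1 ≤ S x := (hS_mono (mem_Ici.2 zero_le_one)
          (mem_Ici.2 (by linarith [mem_Ioi.1 hx])) hx).le
        rw [(h.hasDerivAt_C x).deriv, neg_le_neg_iff]
        exact mul_le_mul hS_ge (h.sqrt_one_sub_le_D hm₀ hm₁ x) (Real.sqrt_nonneg _)
          (hS₁.le.trans hS_ge))
      1 self_mem_Ici y hy hy
  have hy : 1 ≤ 1 + C 1 / b := by
    linarith [div_pos (hC_pos 1 zero_le_one) hb]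
  have := hC_decay _ hy
  rw [add_sub_cancel_left, neg_mul, mul_div_cancel₀ _ hb.ne'] at this
  linarith [hC_pos _ (zero_le_one.trans hy)]

end IsJacobiSystem

theorem stmt_14 (S C D : ℝ → ℝ)
    (hS : Differentiable ℝ S) (hC : Differentiable ℝ C) (hD : Differentiable ℝ D)
    (hS' : ∀ x, deriv S x = C x * D x)
    (hC' : ∀ x, deriv C x = -(S x * D x))
    (hD' : ∀ x, deriv D x = -(1 / 2 * (S x * C x)))
    (hS0 : S 0 = 0) (hC0 : C 0 = 1) (hD0 : D 0 = 1) :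
    ∃ K > 0, C K = 0 ∧ ∀ x ∈ Set.Ico (0 : ℝ) K, 0 < C x := by
  have h : IsJacobiSystem (1 / 2) S C D :=
    { hasDerivAt_S := fun x => hS' x ▸ (hS x).hasDerivAt
      hasDerivAt_C := fun x => hC' x ▸ (hC x).hasDerivAt
      hasDerivAt_D := fun x => hD' x ▸ (hD x).hasDerivAt
      S_zero := hS0
      C_zero := hC0
      D_zero := hD0 }
  obtain ⟨z, hz, hCz⟩ := h.exists_nonneg_C_nonpos (by norm_num) (by norm_num)
  exact exists_first_zero_of_continuousOn hz h.continuous_C.continuousOn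
    (hC0 ▸ one_pos) hCz
end

section
/- For any real numbers a < b, any u, v ∈ ℝ, and any integer n > 3, there exists a C⁴ function Y : ℝ → ℝ solving y''''·(y')² - 3·y'''·y''·y' + 2(1 - n⁻²)·(y'')³ = 0 on ℝ, with Y(x) = u for x ≤ a, Y(x) = v for x ≥ b, and Y monotone on [a, b]. -/
open Real Set Filter intervalIntegral
noncomputable section
namespace S15

def g0 (t : ℝ) : ℝ := Real.sqrt (1 + Real.cos t ^ 2)

lemma g0_pos (t : ℝ) : 0 < g0 t := Real.sqrt_pos.2 (by positivity)

lemma one_le_g0 (t : ℝ) : 1 ≤ g0 t := by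
  rw [show (1:ℝ) = Real.sqrt 1 by simp]
  exact Real.sqrt_le_sqrt (by nlinarith [sq_nonneg (Real.cos t)])

lemma g0_le (t : ℝ) : g0 t ≤ Real.sqrt 2 :=
  Real.sqrt_le_sqrt (by nlinarith [Real.neg_one_le_cos t, Real.cos_le_one t])

lemma cont_g0 : Continuous g0 :=
  (continuous_const.add ((Real.continuous_cos).pow 2)).sqrt

lemma contDiff_g0 (k : ℕ) : ContDiff ℝ k g0 := by
  rw [contDiff_iff_contDiffAt]
  intro x
  exact ContDiffAt.sqrt ((contDiff_const.add (Real.contDiff_cos.pow 2)).contDiffAt)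
    (by positivity)

lemma cont_ig0 : Continuous fun t => (g0 t)⁻¹ := cont_g0.inv₀ fun t => (g0_pos t).ne'

def H (x : ℝ) : ℝ := ∫ t in (0:ℝ)..x, (g0 t)⁻¹

lemma hasDerivAt_H (x : ℝ) : HasDerivAt H ((g0 x)⁻¹) x :=
  integral_hasDerivAt_right (cont_ig0.intervalIntegrable _ _)
    (cont_ig0.stronglyMeasurableAtFilter _ _) cont_ig0.continuousAt

lemma strictMono_H : StrictMono H :=
  strictMono_of_deriv_pos fun x => by
    rw [(hasDerivAt_H x).deriv]; exact inv_pos.2 (g0_pos x)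

lemma H_lower (x : ℝ) (hx : 0 ≤ x) : x * (Real.sqrt 2)⁻¹ ≤ H x := by
  have h2 : (0:ℝ) < Real.sqrt 2 := by positivity
  have hmono : MonotoneOn (fun y => H y - y * (Real.sqrt 2)⁻¹) (Set.Ici 0) := by
    apply monotoneOn_of_deriv_nonneg (convex_Ici 0)
    · exact ((continuous_iff_continuousAt.2 fun x => (hasDerivAt_H x).continuousAt).sub
        (continuous_id.mul continuous_const)).continuousOn
    · intro y _
      exact ((hasDerivAt_H y).sub
        (by simpa using (hasDerivAt_id y).mul_const ((Real.sqrt 2)⁻¹))).differentiableAt.differentiableWithinAt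
    · intro y _
      have hd : HasDerivAt (fun y => H y - y * (Real.sqrt 2)⁻¹)
          ((g0 y)⁻¹ - (Real.sqrt 2)⁻¹) y :=
        (hasDerivAt_H y).sub (by simpa using (hasDerivAt_id y).mul_const ((Real.sqrt 2)⁻¹))
      rw [hd.deriv, sub_nonneg]
      exact inv_anti₀ (g0_pos y) (g0_le y)
  have h0 : H 0 = 0 := integral_same
  have := hmono (Set.self_mem_Ici) (Set.mem_Ici.2 hx) hx
  simp only [h0, zero_mul, sub_zero] at this
  linarith [this]

lemma H_odd (x : ℝ) : H (-x) = - H x := by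
  have h1 : (∫ t in (0:ℝ)..x, (g0 (-t))⁻¹) = ∫ t in (-x)..(0:ℝ), (g0 t)⁻¹ := by
    simpa using integral_comp_neg (a := 0) (b := x) (fun t => (g0 t)⁻¹)
  have h2 : ∀ t : ℝ, (g0 (-t))⁻¹ = (g0 t)⁻¹ := by
    intro t; unfold g0; rw [Real.cos_neg]
  simp only [h2] at h1
  have h3 : (∫ t in (0:ℝ)..(-x), (g0 t)⁻¹) = - ∫ t in (-x)..(0:ℝ), (g0 t)⁻¹ :=
    integral_symm _ _
  unfold H
  rw [h3, h1]

lemma surj_H : Function.Surjective H := by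
  have hc : Continuous H :=
    continuous_iff_continuousAt.2 fun x => (hasDerivAt_H x).continuousAt
  have h2 : (0:ℝ) < (Real.sqrt 2)⁻¹ := by positivity
  have htop : Tendsto H atTop atTop := by
    apply tendsto_atTop_mono' _ _ (tendsto_id.atTop_mul_const h2)
    filter_upwards [eventually_ge_atTop (0:ℝ)] with x hx
    exact H_lower x hx
  have hbot : Tendsto H atBot atBot := by
    have : ∀ᶠ x in atBot, H x ≤ x * (Real.sqrt 2)⁻¹ := by
      filter_upwards [eventually_le_atBot (0:ℝ)] with x hx
      have := H_lower (-x) (by linarith)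
      rw [H_odd] at this
      nlinarith
    apply tendsto_atBot_mono' _ this (tendsto_id.atBot_mul_const h2)
  intro y
  rcases (htop.eventually_ge_atTop y).exists with ⟨hi, hhi⟩
  rcases (hbot.eventually_le_atBot y).exists with ⟨lo, hlo⟩
  rcases intermediate_value_uIcc (a := lo) (b := hi) hc.continuousOn
    (Set.mem_uIcc.2 (Or.inl ⟨hlo, hhi⟩)) with ⟨x, _, hx⟩
  exact ⟨x, hx⟩

end S15
namespace S15

def thOI : ℝ ≃o ℝ := StrictMono.orderIsoOfSurjective H strictMono_H surj_H

def th (y : ℝ) : ℝ := thOI.symm y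

lemma H_th (y : ℝ) : H (th y) = y :=
  StrictMono.orderIsoOfSurjective_self_symm_apply H strictMono_H surj_H y

lemma th_H (x : ℝ) : th (H x) = x :=
  StrictMono.orderIsoOfSurjective_symm_apply_self H strictMono_H surj_H x

lemma cont_th : Continuous th := (thOI.symm : ℝ ≃o ℝ).continuous

lemma strictMono_th : StrictMono th := (thOI.symm : ℝ ≃o ℝ).strictMono

lemma hasDerivAt_th (y : ℝ) : HasDerivAt th (g0 (th y)) y := by
  have h := HasDerivAt.of_local_left_inverse (f := H) (g := th)
    cont_th.continuousAt (hasDerivAt_H (th y)) (inv_ne_zero (g0_pos (th y)).ne')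
    (Filter.Eventually.of_forall H_th)
  simpa using h

lemma contDiff_th (k : ℕ) : ContDiff ℝ k th := by
  induction k with
  | zero => exact contDiff_zero.2 cont_th
  | succ k ih =>
    have hd : deriv th = fun y => g0 (th y) := funext fun y => (hasDerivAt_th y).deriv
    rw [show ((k+1 : ℕ) : WithTop ℕ∞) = (k : WithTop ℕ∞) + 1 by push_cast; ring,
      contDiff_succ_iff_deriv]
    refine ⟨fun y => (hasDerivAt_th y).differentiableAt, ?_, ?_⟩
    · intro h; simp at h
    · rw [hd]; exact (contDiff_g0 k).comp ih

lemma th_zero : th 0 = 0 := by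
  have : H 0 = 0 := intervalIntegral.integral_same
  calc th 0 = th (H 0) := by rw [this]
  _ = 0 := th_H 0

lemma th_odd (y : ℝ) : th (-y) = - th y := by
  have : H (- th y) = - y := by rw [H_odd, H_th]
  calc th (-y) = th (H (- th y)) := by rw [this]
  _ = - th y := th_H _

def Kc : ℝ := H (Real.pi / 2)

lemma th_Kc : th Kc = Real.pi / 2 := th_H _

lemma th_negKc : th (-Kc) = - (Real.pi / 2) := by rw [th_odd, th_Kc]

lemma Kc_pos : 0 < Kc := by
  have h0 : H 0 = 0 := intervalIntegral.integral_same
  have := strictMono_H (show (0:ℝ) < Real.pi/2 by positivity)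
  rwa [h0] at this

def f (x : ℝ) : ℝ := Real.cos (th x)
def f1 (x : ℝ) : ℝ := -Real.sin (th x) * g0 (th x)
def f2 (x : ℝ) : ℝ := -2 * f x ^ 3
def f3 (x : ℝ) : ℝ := -6 * f x ^ 2 * f1 x

lemma hasDerivAt_f (x : ℝ) : HasDerivAt f (f1 x) x := by
  have h := (Real.hasDerivAt_cos (th x)).comp x (hasDerivAt_th x)
  exact h.congr_deriv (by simp [f1])

lemma cont_f : Continuous f := Real.continuous_cos.comp cont_th
lemma cont_f1 : Continuous f1 :=
  ((Real.continuous_sin.comp cont_th).neg).mul (cont_g0.comp cont_th)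
lemma cont_f2 : Continuous f2 := by
  unfold f2; exact continuous_const.mul (cont_f.pow 3)
lemma cont_f3 : Continuous f3 := by
  unfold f3; exact (continuous_const.mul (cont_f.pow 2)).mul cont_f1

lemma hasDerivAt_f1 (x : ℝ) : HasDerivAt f1 (f2 x) x := by
  have hq : HasDerivAt (fun y => 1 + Real.cos (th y) ^ 2)
      (2 * Real.cos (th x) * f1 x) x := by
    simpa [f] using ((hasDerivAt_f x).pow 2).const_add 1
  have hqpos : (0:ℝ) < 1 + Real.cos (th x) ^ 2 := by positivity
  have hsq : HasDerivAt (fun y => Real.sqrt (1 + Real.cos (th y) ^ 2))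
      (1 / (2 * Real.sqrt (1 + Real.cos (th x) ^ 2)) * (2 * Real.cos (th x) * f1 x)) x :=
    (Real.hasDerivAt_sqrt hqpos.ne').comp x hq
  have hs : HasDerivAt (fun y => Real.sin (th y)) (Real.cos (th x) * g0 (th x)) x :=
    (Real.hasDerivAt_sin (th x)).comp x (hasDerivAt_th x)
  have hmul : HasDerivAt (fun y => -(Real.sin (th y) * Real.sqrt (1 + Real.cos (th y) ^ 2)))
      (-(Real.cos (th x) * g0 (th x) * Real.sqrt (1 + Real.cos (th x) ^ 2)
        + Real.sin (th x) * (1 / (2 * Real.sqrt (1 + Real.cos (th x) ^ 2))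
          * (2 * Real.cos (th x) * f1 x)))) x := (hs.mul hsq).neg
  have heq : f1 = fun y => -(Real.sin (th y) * Real.sqrt (1 + Real.cos (th y) ^ 2)) := by
    funext y; simp [f1, g0]
  rw [heq]
  convert hmul using 1
  have hG : Real.sqrt (1 + Real.cos (th x) ^ 2) = g0 (th x) := rfl
  have hG2 : g0 (th x) ^ 2 = 1 + Real.cos (th x) ^ 2 := Real.sq_sqrt hqpos.le
  have hGpos : 0 < g0 (th x) := g0_pos _
  have hsin : Real.sin (th x) ^ 2 = 1 - Real.cos (th x) ^ 2 := by
    have := Real.sin_sq_add_cos_sq (th x); linarith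
  rw [hG]
  have h5 : (1 / (2 * g0 (th x)) * (2 * Real.cos (th x) * f1 x))
      = -Real.cos (th x) * Real.sin (th x) := by
    rw [f1]; field_simp
  rw [h5]
  simp only [f2, f]
  linear_combination Real.cos (th x) * hG2 - Real.cos (th x) * hsin

lemma hasDerivAt_f2 (x : ℝ) : HasDerivAt f2 (f3 x) x := by
  have := ((hasDerivAt_f x).pow 3).const_mul (-2 : ℝ)
  exact this.congr_deriv (by rw [f3, show 3 - 1 = 2 from rfl]; ring)

lemma f_Kc : f Kc = 0 := by rw [f, th_Kc, Real.cos_pi_div_two]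
lemma f_negKc : f (-Kc) = 0 := by rw [f, th_negKc, Real.cos_neg, Real.cos_pi_div_two]
lemma f_zero : f 0 = 1 := by rw [f, th_zero, Real.cos_zero]

lemma f_nonneg {x : ℝ} (hx : x ∈ Set.Icc (-Kc) Kc) : 0 ≤ f x := by
  apply Real.cos_nonneg_of_mem_Icc
  constructor
  · rw [← th_negKc]; exact (strictMono_th.le_iff_le).2 hx.1
  · rw [← th_Kc]; exact (strictMono_th.le_iff_le).2 hx.2

lemma f_pos {x : ℝ} (hx : x ∈ Set.Ioo (-Kc) Kc) : 0 < f x := by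
  apply Real.cos_pos_of_mem_Ioo
  constructor
  · rw [show -(Real.pi/2) = th (-Kc) from th_negKc.symm]; exact strictMono_th hx.1
  · rw [← th_Kc]; exact strictMono_th hx.2

end S15
namespace S15

variable (j : ℕ)

def W0 (x : ℝ) : ℝ := f x ^ (j+4)
def W1 (x : ℝ) : ℝ := ((j:ℝ)+4) * f x ^ (j+3) * f1 x
def W2 (x : ℝ) : ℝ := ((j:ℝ)+4)*((j:ℝ)+3)*f x^(j+2)*f1 x^2 + ((j:ℝ)+4)*f x^(j+3)*f2 x
def W3 (x : ℝ) : ℝ := ((j:ℝ)+4)*((j:ℝ)+3)*((j:ℝ)+2)*f x^(j+1)*f1 x^3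
  + 3*((j:ℝ)+4)*((j:ℝ)+3)*f x^(j+2)*f1 x*f2 x + ((j:ℝ)+4)*f x^(j+3)*f3 x

lemma hasDerivAt_W0 (x : ℝ) : HasDerivAt (W0 j) (W1 j x) x := by
  have h := (hasDerivAt_f x).pow (j+4)
  have e : W1 j x = (↑(j+4) : ℝ) * f x ^ (j+4-1) * f1 x := by
    rw [W1, show j+4-1 = j+3 by omega]; push_cast; ring
  rw [e]; exact h

lemma hasDerivAt_W1 (x : ℝ) : HasDerivAt (W1 j) (W2 j x) x := by
  have h1 := (((hasDerivAt_f x).pow (j+3)).mul (hasDerivAt_f1 x)).const_mul ((j:ℝ)+4)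
  have e : W2 j x = ((j:ℝ)+4) * ((↑(j+3):ℝ) * f x ^ (j+3-1) * f1 x * f1 x
      + f x ^ (j+3) * f2 x) := by
    rw [W2, show j+3-1 = j+2 by omega]; push_cast; ring
  have hfun : W1 j = fun y => ((j:ℝ)+4) * (f y ^ (j+3) * f1 y) := by
    funext y; rw [W1]; ring
  rw [hfun, e]; exact h1

lemma hasDerivAt_W2 (x : ℝ) : HasDerivAt (W2 j) (W3 j x) x := by
  have h1 := ((((hasDerivAt_f x).pow (j+2)).mul ((hasDerivAt_f1 x).pow 2)).const_mul
    (((j:ℝ)+4)*((j:ℝ)+3))).add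
    ((((hasDerivAt_f x).pow (j+3)).mul (hasDerivAt_f2 x)).const_mul ((j:ℝ)+4))
  have e : W3 j x = ((j:ℝ)+4)*((j:ℝ)+3) * ((↑(j+2):ℝ) * f x ^ (j+2-1) * f1 x * f1 x ^ 2
      + f x ^ (j+2) * ((2:ℝ) * f1 x ^ (2-1) * f2 x))
      + ((j:ℝ)+4) * ((↑(j+3):ℝ) * f x ^ (j+3-1) * f1 x * f2 x + f x ^ (j+3) * f3 x) := by
    rw [W3, show j+2-1 = j+1 by omega, show j+3-1 = j+2 by omega, show 2-1 = 1 by omega, f3]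
    push_cast
    ring
  have hfun : W2 j = fun y => ((j:ℝ)+4)*((j:ℝ)+3) * (f y ^ (j+2) * f1 y ^ 2)
      + ((j:ℝ)+4) * (f y ^ (j+3) * f2 y) := by
    funext y; rw [W2]; ring
  rw [hfun, e]; exact h1

def wb (i : ℕ) : ℝ → ℝ :=
  Set.indicator (Set.Icc (-Kc) Kc) (fun x => [W0 j, W1 j, W2 j, W3 j].getD i 0 x)

lemma wb_eq_of_mem {i : ℕ} {x : ℝ} (hx : x ∈ Set.Icc (-Kc) Kc) :
    wb j i x = [W0 j, W1 j, W2 j, W3 j].getD i 0 x := Set.indicator_of_mem hx _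

lemma wb_eq_of_not_mem {i : ℕ} {x : ℝ} (hx : x ∉ Set.Icc (-Kc) Kc) :
    wb j i x = 0 := Set.indicator_of_notMem hx _

/-- junction: indicator of `f^2 * R` has derivative 0 where `f` vanishes -/
lemma junction_deriv {R : ℝ → ℝ} {c : ℝ} (hR : Continuous R) (hc : f c = 0) :
    HasDerivAt (Set.indicator (Set.Icc (-Kc) Kc) (fun x => f x ^ 2 * R x)) 0 c := by
  rw [hasDerivAt_iff_isLittleO]
  have hval : Set.indicator (Set.Icc (-Kc) Kc) (fun x => f x ^ 2 * R x) c = 0 := by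
    by_cases h : c ∈ Set.Icc (-Kc) Kc
    · rw [Set.indicator_of_mem h]; simp [hc]
    · rw [Set.indicator_of_notMem h]
  have hO : (fun x => f x) =O[nhds c] (fun x => x - c) := by
    have := (hasDerivAt_f c).isBigO_sub
    simpa [hc] using this
  have hR1 : (fun x => R x) =O[nhds c] (fun _ => (1:ℝ)) :=
    hR.continuousAt.isBigO_one ℝ
  have hO2 : (fun x => f x ^ 2 * R x) =O[nhds c] (fun x => (x - c)^2) := by
    have := ((hO.mul hO).mul hR1)
    simpa [pow_two] using this
  have hlo : (fun x : ℝ => (x - c)^2) =o[nhds c] (fun x => x - c) := by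
    have h1 : (fun x : ℝ => x - c) =o[nhds c] (fun _ => (1:ℝ)) := by
      rw [Asymptotics.isLittleO_one_iff]
      have : Filter.Tendsto (fun x : ℝ => x - c) (nhds c) (nhds (c - c)) :=
        (continuous_id.sub continuous_const).continuousAt
      simpa using this
    have := h1.mul_isBigO (Asymptotics.isBigO_refl (fun x : ℝ => x - c) (nhds c))
    simpa [pow_two] using this
  have hind : (fun x => Set.indicator (Set.Icc (-Kc) Kc) (fun x => f x ^ 2 * R x) x)
      =O[nhds c] (fun x => f x ^ 2 * R x) := by
    apply Asymptotics.IsBigO.of_bound 1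
    filter_upwards with x
    simp only [one_mul, Real.norm_eq_abs]
    by_cases h : x ∈ Set.Icc (-Kc) Kc
    · rw [Set.indicator_of_mem h]
    · rw [Set.indicator_of_notMem h]; simp; positivity
  simp only [hval, smul_zero, sub_zero]
  exact (hind.trans hO2).trans_isLittleO hlo

lemma W0_factor : W0 j = fun x => f x ^ 2 * (f x ^ (j+2)) := by
  funext x; rw [W0, show j+4 = 2+(j+2) by omega, pow_add]

lemma W1_factor : W1 j = fun x => f x ^ 2 * (((j:ℝ)+4) * f x ^ (j+1) * f1 x) := by
  funext x; rw [W1, show j+3 = 2+(j+1) by omega, pow_add]; ring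

lemma W2_factor : W2 j = fun x =>
    f x ^ 2 * (((j:ℝ)+4)*((j:ℝ)+3)*f x^j*f1 x^2 + ((j:ℝ)+4)*f x^(j+1)*f2 x) := by
  funext x
  rw [W2, show j+2 = 2+j by omega, show j+3 = 2+(j+1) by omega]
  simp only [pow_add]; ring

lemma W3_factor : W3 j = fun x =>
    f x * (((j:ℝ)+4)*((j:ℝ)+3)*((j:ℝ)+2)*f x^j*f1 x^3
      + 3*((j:ℝ)+4)*((j:ℝ)+3)*f x^(j+1)*f1 x*f2 x + ((j:ℝ)+4)*f x^(j+2)*f3 x) := by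
  funext x
  rw [W3, show j+3 = 1+(j+2) by omega, show j+2 = 1+(j+1) by omega, show j+1 = 1+j by omega]
  simp only [pow_add]; ring

end S15
namespace S15
variable (j : ℕ)

lemma wb0_def : wb j 0 = Set.indicator (Set.Icc (-Kc) Kc) (W0 j) := rfl
lemma wb1_def : wb j 1 = Set.indicator (Set.Icc (-Kc) Kc) (W1 j) := rfl
lemma wb2_def : wb j 2 = Set.indicator (Set.Icc (-Kc) Kc) (W2 j) := rfl
lemma wb3_def : wb j 3 = Set.indicator (Set.Icc (-Kc) Kc) (W3 j) := rfl

lemma W1_zero {c : ℝ} (hc : f c = 0) : W1 j c = 0 := by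
  rw [W1, hc, zero_pow (by omega : j+3 ≠ 0)]; ring
lemma W2_zero {c : ℝ} (hc : f c = 0) : W2 j c = 0 := by
  rw [W2, hc, zero_pow (by omega : j+3 ≠ 0), zero_pow (by omega : j+2 ≠ 0)]; ring
lemma W3_zero {c : ℝ} (hc : f c = 0) : W3 j c = 0 := by
  rw [W3, hc, zero_pow (by omega : j+3 ≠ 0), zero_pow (by omega : j+2 ≠ 0),
    zero_pow (by omega : j+1 ≠ 0)]; ring

lemma mem_Icc_cases {x : ℝ} (h2 : x ∈ Set.Icc (-Kc) Kc) (h1 : x ∉ Set.Ioo (-Kc) Kc) :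
    x = Kc ∨ x = -Kc := by
  rcases h2 with ⟨ha, hb⟩
  rw [Set.mem_Ioo] at h1
  push_neg at h1
  rcases lt_or_eq_of_le ha with h | h
  · left; linarith [h1 h]
  · right; exact h.symm

lemma hasDerivAt_wb_aux {F G R : ℝ → ℝ} (hFG : ∀ x, HasDerivAt F (G x) x)
    (hfac : F = fun x => f x ^ 2 * R x) (hR : Continuous R)
    (hGK : G Kc = 0) (hGK' : G (-Kc) = 0) (x : ℝ) :
    HasDerivAt (Set.indicator (Set.Icc (-Kc) Kc) F)
      (Set.indicator (Set.Icc (-Kc) Kc) G x) x := by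
  by_cases h1 : x ∈ Set.Ioo (-Kc) Kc
  · have hev : Set.indicator (Set.Icc (-Kc) Kc) F =ᶠ[nhds x] F := by
      filter_upwards [isOpen_Ioo.mem_nhds h1] with y hy
      exact Set.indicator_of_mem (Set.Ioo_subset_Icc_self hy) F
    rw [Set.indicator_of_mem (Set.Ioo_subset_Icc_self h1)]
    exact (hFG x).congr_of_eventuallyEq hev
  by_cases h2 : x ∈ Set.Icc (-Kc) Kc
  · rw [Set.indicator_of_mem h2]
    rcases mem_Icc_cases h2 h1 with h | h <;> subst h
    · rw [hGK, hfac]; exact junction_deriv hR f_Kc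
    · rw [hGK', hfac]; exact junction_deriv hR f_negKc
  · have hev : Set.indicator (Set.Icc (-Kc) Kc) F =ᶠ[nhds x] (fun _ => 0) := by
      filter_upwards [isClosed_Icc.isOpen_compl.mem_nhds h2] with y hy
      exact Set.indicator_of_notMem hy F
    rw [Set.indicator_of_notMem h2]
    exact (hasDerivAt_const x 0).congr_of_eventuallyEq hev

lemma hasDerivAt_wb0 (x : ℝ) : HasDerivAt (wb j 0) (wb j 1 x) x := by
  rw [wb0_def, wb1_def]
  exact hasDerivAt_wb_aux (hasDerivAt_W0 j) (W0_factor j) (cont_f.pow (j+2))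
    (W1_zero j f_Kc) (W1_zero j f_negKc) x

lemma hasDerivAt_wb1 (x : ℝ) : HasDerivAt (wb j 1) (wb j 2 x) x := by
  rw [wb1_def, wb2_def]
  refine hasDerivAt_wb_aux (hasDerivAt_W1 j) (W1_factor j) ?_
    (W2_zero j f_Kc) (W2_zero j f_negKc) x
  exact (continuous_const.mul (cont_f.pow (j+1))).mul cont_f1

lemma cont_W2R : Continuous (fun x =>
    ((j:ℝ)+4)*((j:ℝ)+3)*f x^j*f1 x^2 + ((j:ℝ)+4)*f x^(j+1)*f2 x) :=
  ((continuous_const.mul (cont_f.pow j)).mul (cont_f1.pow 2)).add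
    ((continuous_const.mul (cont_f.pow (j+1))).mul cont_f2)

lemma cont_W3R : Continuous (fun x =>
    ((j:ℝ)+4)*((j:ℝ)+3)*((j:ℝ)+2)*f x^j*f1 x^3
      + 3*((j:ℝ)+4)*((j:ℝ)+3)*f x^(j+1)*f1 x*f2 x + ((j:ℝ)+4)*f x^(j+2)*f3 x) :=
  (((continuous_const.mul (cont_f.pow j)).mul (cont_f1.pow 3)).add
    (((continuous_const.mul (cont_f.pow (j+1))).mul cont_f1).mul cont_f2)).add
    ((continuous_const.mul (cont_f.pow (j+2))).mul cont_f3)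

lemma hasDerivAt_wb2 (x : ℝ) : HasDerivAt (wb j 2) (wb j 3 x) x := by
  rw [wb2_def, wb3_def]
  exact hasDerivAt_wb_aux (hasDerivAt_W2 j) (W2_factor j) (cont_W2R j)
    (W3_zero j f_Kc) (W3_zero j f_negKc) x

lemma cont_ind_aux {F R : ℝ → ℝ} (hF : Continuous F)
    (hfac : F = fun x => f x * R x) (hR : Continuous R) :
    Continuous (Set.indicator (Set.Icc (-Kc) Kc) F) := by
  rw [continuous_iff_continuousAt]
  intro x
  by_cases h1 : x ∈ Set.Ioo (-Kc) Kc
  · have hev : Set.indicator (Set.Icc (-Kc) Kc) F =ᶠ[nhds x] F := by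
      filter_upwards [isOpen_Ioo.mem_nhds h1] with y hy
      exact Set.indicator_of_mem (Set.Ioo_subset_Icc_self hy) F
    exact hF.continuousAt.congr hev.symm
  by_cases h2 : x ∈ Set.Icc (-Kc) Kc
  · have hc : f x = 0 := by
      rcases mem_Icc_cases h2 h1 with h | h <;> subst h
      · exact f_Kc
      · exact f_negKc
    have hx0 : Set.indicator (Set.Icc (-Kc) Kc) F x = 0 := by
      rw [Set.indicator_of_mem h2, hfac]; simp [hc]
    unfold ContinuousAt
    rw [hx0]
    refine squeeze_zero_norm (a := fun y => ‖f y * R y‖) ?_ ?_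
    · intro y
      by_cases hy : y ∈ Set.Icc (-Kc) Kc
      · rw [Set.indicator_of_mem hy, hfac]
      · rw [Set.indicator_of_notMem hy]
        simp only [norm_zero]
        positivity
    · have h5 := ((cont_f.mul hR).norm).tendsto x
      simpa [hc] using h5
  · have hev : Set.indicator (Set.Icc (-Kc) Kc) F =ᶠ[nhds x] (fun _ => (0:ℝ)) := by
      filter_upwards [isClosed_Icc.isOpen_compl.mem_nhds h2] with y hy
      exact Set.indicator_of_notMem hy F
    exact continuousAt_const.congr hev.symm

lemma cont_W3 : Continuous (W3 j) := by
  rw [W3_factor]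
  exact cont_f.mul (cont_W3R j)

lemma cont_wb3 : Continuous (wb j 3) := by
  rw [wb3_def]
  exact cont_ind_aux (cont_W3 j) (W3_factor j) (cont_W3R j)

end S15
namespace S15
variable (j : ℕ)

lemma cont_wb (i : ℕ) (hi : i < 4) : Continuous (wb j i) := by
  interval_cases i
  · exact continuous_iff_continuousAt.2 fun x => (hasDerivAt_wb0 j x).continuousAt
  · exact continuous_iff_continuousAt.2 fun x => (hasDerivAt_wb1 j x).continuousAt
  · exact continuous_iff_continuousAt.2 fun x => (hasDerivAt_wb2 j x).continuousAt
  · exact cont_wb3 j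

lemma deriv_wb0 : deriv (wb j 0) = wb j 1 := funext fun x => (hasDerivAt_wb0 j x).deriv
lemma deriv_wb1 : deriv (wb j 1) = wb j 2 := funext fun x => (hasDerivAt_wb1 j x).deriv
lemma deriv_wb2 : deriv (wb j 2) = wb j 3 := funext fun x => (hasDerivAt_wb2 j x).deriv

lemma contDiff_wb2 : ContDiff ℝ 1 (wb j 2) := by
  rw [contDiff_one_iff_deriv]
  exact ⟨fun x => (hasDerivAt_wb2 j x).differentiableAt, by rw [deriv_wb2]; exact cont_wb3 j⟩

lemma contDiff_wb1 : ContDiff ℝ 2 (wb j 1) := by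
  rw [show (2 : WithTop ℕ∞) = 1 + 1 by norm_num, contDiff_succ_iff_deriv]
  refine ⟨fun x => (hasDerivAt_wb1 j x).differentiableAt, by intro h; simp at h, ?_⟩
  rw [deriv_wb1]; exact contDiff_wb2 j

lemma contDiff_wb0 : ContDiff ℝ 3 (wb j 0) := by
  rw [show (3 : WithTop ℕ∞) = 2 + 1 by norm_num, contDiff_succ_iff_deriv]
  refine ⟨fun x => (hasDerivAt_wb0 j x).differentiableAt, by intro h; simp at h, ?_⟩
  rw [deriv_wb0]; exact contDiff_wb1 j

def WW (y : ℝ) : ℝ := ∫ t in (-Kc)..y, wb j 0 t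

lemma hasDerivAt_WW (y : ℝ) : HasDerivAt (WW j) (wb j 0 y) y :=
  intervalIntegral.integral_hasDerivAt_right
    ((cont_wb j 0 (by omega)).intervalIntegrable _ _)
    ((cont_wb j 0 (by omega)).stronglyMeasurableAtFilter _ _)
    (cont_wb j 0 (by omega)).continuousAt

lemma contDiff_WW : ContDiff ℝ 4 (WW j) := by
  rw [show (4 : WithTop ℕ∞) = 3 + 1 by norm_num, contDiff_succ_iff_deriv]
  refine ⟨fun x => (hasDerivAt_WW j x).differentiableAt, by intro h; simp at h, ?_⟩
  rw [funext fun x => (hasDerivAt_WW j x).deriv]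
  exact contDiff_wb0 j

lemma wb0_nonneg (t : ℝ) : 0 ≤ wb j 0 t := by
  rw [wb0_def]
  by_cases h : t ∈ Set.Icc (-Kc) Kc
  · rw [Set.indicator_of_mem h, W0]
    exact pow_nonneg (f_nonneg h) _
  · rw [Set.indicator_of_notMem h]

lemma wb0_zero_of_le {t : ℝ} (ht : t ≤ -Kc) : wb j 0 t = 0 := by
  rcases eq_or_lt_of_le ht with h | h
  · subst h
    rw [wb0_def, Set.indicator_of_mem (by constructor <;> linarith [Kc_pos]),
      W0, f_negKc, zero_pow (by omega : j+4 ≠ 0)]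
  · exact wb_eq_of_not_mem j fun hm => absurd hm.1 (not_le.2 h)

lemma wb0_zero_of_ge {t : ℝ} (ht : Kc ≤ t) : wb j 0 t = 0 := by
  rcases eq_or_lt_of_le ht with h | h
  · rw [wb0_def, ← h, Set.indicator_of_mem (by constructor <;> linarith [Kc_pos]),
      W0, f_Kc, zero_pow (by omega : j+4 ≠ 0)]
  · exact wb_eq_of_not_mem j fun hm => absurd hm.2 (not_le.2 h)

lemma WW_of_le {y : ℝ} (hy : y ≤ -Kc) : WW j y = 0 := by
  rw [WW, ← intervalIntegral.integral_zero (a := -Kc) (b := y) (μ := MeasureTheory.volume)]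
  apply intervalIntegral.integral_congr
  intro t ht
  rcases Set.mem_uIcc.1 ht with h | h
  · exact wb0_zero_of_le j (le_trans h.2 hy)
  · exact wb0_zero_of_le j h.2

lemma WW_of_ge {y : ℝ} (hy : Kc ≤ y) : WW j y = WW j Kc := by
  have h1 : (∫ t in (-Kc)..Kc, wb j 0 t) + (∫ t in Kc..y, wb j 0 t)
      = ∫ t in (-Kc)..y, wb j 0 t :=
    intervalIntegral.integral_add_adjacent_intervals
      ((cont_wb j 0 (by omega)).intervalIntegrable _ _)
      ((cont_wb j 0 (by omega)).intervalIntegrable _ _)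
  have h2 : (∫ t in Kc..y, wb j 0 t) = 0 := by
    rw [← intervalIntegral.integral_zero (a := Kc) (b := y) (μ := MeasureTheory.volume)]
    apply intervalIntegral.integral_congr
    intro t ht
    rcases Set.mem_uIcc.1 ht with h | h
    · exact wb0_zero_of_ge j h.1
    · exact wb0_zero_of_ge j (hy.trans h.1)
  rw [WW, WW, ← h1, h2, add_zero]

lemma WW_Kc_pos : 0 < WW j Kc := by
  rw [WW]
  apply intervalIntegral.intervalIntegral_pos_of_pos_on
    ((cont_wb j 0 (by omega)).intervalIntegrable _ _)
  · intro t ht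
    rw [wb_eq_of_mem j (Set.Ioo_subset_Icc_self ht)]
    exact pow_pos (f_pos ht) _
  · linarith [Kc_pos]

lemma monotone_WW : Monotone (WW j) := by
  have : ∀ x, 0 ≤ deriv (WW j) x := fun x => by
    rw [(hasDerivAt_WW j x).deriv]; exact wb0_nonneg j x
  exact monotone_of_deriv_nonneg (fun x => (hasDerivAt_WW j x).differentiableAt) this

/-- the key algebraic identity -/
lemma key_identity (x : ℝ) :
    W3 j x * W0 j x ^ 2 - 3 * W2 j x * W1 j x * W0 j x
      + 2 * (1 - (((j:ℝ)+4) ^ 2)⁻¹) * W1 j x ^ 3 = 0 := by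
  have hν : ((j:ℝ)+4) ≠ 0 := by positivity
  rw [W0, W1, W2, W3, f2, f3]
  set c := f x
  set p := f1 x
  have e1 : c ^ (j+4) = c ^ j * c ^ 4 := pow_add c j 4
  have e2 : c ^ (j+3) = c ^ j * c ^ 3 := pow_add c j 3
  have e3 : c ^ (j+2) = c ^ j * c ^ 2 := pow_add c j 2
  have e4 : c ^ (j+1) = c ^ j * c ^ 1 := pow_add c j 1
  rw [e1, e2, e3, e4]
  field_simp
  ring
end S15
namespace S15
variable (j : ℕ)

lemma wb0_mem {t : ℝ} (ht : t ∈ Set.Icc (-Kc) Kc) : wb j 0 t = W0 j t := by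
  rw [wb0_def, Set.indicator_of_mem ht]
lemma wb1_mem {t : ℝ} (ht : t ∈ Set.Icc (-Kc) Kc) : wb j 1 t = W1 j t := by
  rw [wb1_def, Set.indicator_of_mem ht]
lemma wb2_mem {t : ℝ} (ht : t ∈ Set.Icc (-Kc) Kc) : wb j 2 t = W2 j t := by
  rw [wb2_def, Set.indicator_of_mem ht]
lemma wb3_mem {t : ℝ} (ht : t ∈ Set.Icc (-Kc) Kc) : wb j 3 t = W3 j t := by
  rw [wb3_def, Set.indicator_of_mem ht]
lemma wb_notmem (i : ℕ) {t : ℝ} (ht : t ∉ Set.Icc (-Kc) Kc) : wb j i t = 0 :=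
  Set.indicator_of_notMem ht _

end S15

theorem stmt_15 (a b u v : ℝ) (hab : a < b) (n : ℤ) (hn : 3 < n) :
    ∃ Y : ℝ → ℝ, ContDiff ℝ 4 Y ∧
      (∀ x, iteratedDeriv 4 Y x * deriv Y x ^ 2
        - 3 * iteratedDeriv 3 Y x * iteratedDeriv 2 Y x * deriv Y x
        + 2 * (1 - ((n : ℝ) ^ 2)⁻¹) * iteratedDeriv 2 Y x ^ 3 = 0) ∧
      (∀ x ≤ a, Y x = u) ∧ (∀ x, b ≤ x → Y x = v) ∧
      (MonotoneOn Y (Set.Icc a b) ∨ AntitoneOn Y (Set.Icc a b)) := by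
  classical
  open S15 in
  -- parameters
  set j : ℕ := (n - 4).toNat with hjdef
  have hz : (j:ℤ) = n - 4 := by rw [hjdef]; exact Int.toNat_of_nonneg (by omega)
  have hj : ((j:ℝ) + 4) = (n:ℝ) := by
    have h := congrArg (fun z : ℤ => (z : ℝ)) hz
    push_cast at h
    linarith
  have hKc := Kc_pos
  set α : ℝ := 2 * Kc / (b - a) with hαdef
  have hα : 0 < α := by
    apply div_pos (by linarith) (by linarith)
  set β : ℝ := -Kc - α * a with hβdef
  have haff_a : α * a + β = -Kc := by rw [hβdef]; ring
  have haff_b : α * b + β = Kc := by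
    have h1 : α * b + β = -Kc + α * (b - a) := by rw [hβdef]; ring
    have h2 : α * (b - a) = 2 * Kc := by
      rw [hαdef, div_mul_cancel₀]
      linarith
    rw [h1, h2]; ring
  set I : ℝ := WW j Kc with hIdef
  have hI : 0 < I := WW_Kc_pos j
  set γ : ℝ := (v - u) / I with hγdef
  set Y : ℝ → ℝ := fun x => u + γ * WW j (α * x + β) with hYdef
  have haffd : ∀ x : ℝ, HasDerivAt (fun x : ℝ => α * x + β) α x := by
    intro x
    simpa using ((hasDerivAt_id x).const_mul α).add_const β
  have haffc : ContDiff ℝ 4 (fun x : ℝ => α * x + β) :=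
    (contDiff_const.mul contDiff_id).add contDiff_const
  refine ⟨Y, ?_, ?_, ?_, ?_, ?_⟩
  · -- smoothness
    exact contDiff_const.add (contDiff_const.mul ((contDiff_WW j).comp haffc))
  · -- ODE
    set D1 : ℝ → ℝ := fun x => γ * α ^ 1 * wb j 0 (α * x + β) with hD1
    set D2 : ℝ → ℝ := fun x => γ * α ^ 2 * wb j 1 (α * x + β) with hD2
    set D3 : ℝ → ℝ := fun x => γ * α ^ 3 * wb j 2 (α * x + β) with hD3
    set D4 : ℝ → ℝ := fun x => γ * α ^ 4 * wb j 3 (α * x + β) with hD4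
    have hd1 : ∀ x, HasDerivAt Y (D1 x) x := by
      intro x
      have h := (((hasDerivAt_WW j (α * x + β)).comp x (haffd x)).const_mul γ).const_add u
      exact h.congr_deriv (by simp only [hD1]; ring)
    have hd2 : ∀ x, HasDerivAt D1 (D2 x) x := by
      intro x
      have h := (((hasDerivAt_wb0 j (α * x + β)).comp x (haffd x)).const_mul (γ * α ^ 1))
      exact h.congr_deriv (by simp only [hD2]; ring)
    have hd3 : ∀ x, HasDerivAt D2 (D3 x) x := by
      intro x
      have h := (((hasDerivAt_wb1 j (α * x + β)).comp x (haffd x)).const_mul (γ * α ^ 2))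
      exact h.congr_deriv (by simp only [hD3]; ring)
    have hd4 : ∀ x, HasDerivAt D3 (D4 x) x := by
      intro x
      have h := (((hasDerivAt_wb2 j (α * x + β)).comp x (haffd x)).const_mul (γ * α ^ 3))
      exact h.congr_deriv (by simp only [hD4]; ring)
    have e1 : deriv Y = D1 := funext fun x => (hd1 x).deriv
    have e2 : iteratedDeriv 2 Y = D2 := by
      rw [show (2:ℕ) = 1+1 from rfl, iteratedDeriv_succ, iteratedDeriv_one, e1]
      exact funext fun x => (hd2 x).deriv
    have e3 : iteratedDeriv 3 Y = D3 := by
      rw [show (3:ℕ) = 2+1 from rfl, iteratedDeriv_succ, e2]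
      exact funext fun x => (hd3 x).deriv
    have e4 : iteratedDeriv 4 Y = D4 := by
      rw [show (4:ℕ) = 3+1 from rfl, iteratedDeriv_succ, e3]
      exact funext fun x => (hd4 x).deriv
    intro x
    rw [e1, e2, e3, e4]
    simp only [hD1, hD2, hD3, hD4]
    set t : ℝ := α * x + β with htdef
    by_cases hmem : t ∈ Set.Icc (-Kc) Kc
    · rw [wb0_mem j hmem, wb1_mem j hmem, wb2_mem j hmem, wb3_mem j hmem, ← hj]
      have key := key_identity j t
      linear_combination (γ^3 * α^6) * key
    · rw [wb_notmem j 0 hmem, wb_notmem j 1 hmem, wb_notmem j 2 hmem, wb_notmem j 3 hmem]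
      ring
  · -- left constant
    intro x hx
    have ht : α * x + β ≤ -Kc := by
      rw [← haff_a]
      have : α * x ≤ α * a := by nlinarith
      linarith
    show u + γ * WW j (α * x + β) = u
    rw [WW_of_le j ht]
    ring
  · -- right constant
    intro x hx
    have ht : Kc ≤ α * x + β := by
      rw [← haff_b]
      have : α * b ≤ α * x := by nlinarith
      linarith
    show u + γ * WW j (α * x + β) = v
    rw [WW_of_ge j ht, ← hIdef, hγdef]
    rw [div_mul_cancel₀ _ hI.ne']; ring
  · -- monotone
    rcases le_total u v with huv | huv
    · left
      intro x _ y _ hxy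
      have h1 : WW j (α * x + β) ≤ WW j (α * y + β) :=
        monotone_WW j (by nlinarith)
      have hγ0 : 0 ≤ γ := by
        rw [hγdef]
        apply div_nonneg (by linarith) hI.le
      show u + γ * WW j (α * x + β) ≤ u + γ * WW j (α * y + β)
      nlinarith
    · right
      intro x _ y _ hxy
      have h1 : WW j (α * x + β) ≤ WW j (α * y + β) :=
        monotone_WW j (by nlinarith)
      have hγ0 : γ ≤ 0 := by
        rw [hγdef]
        apply div_nonpos_of_nonpos_of_nonneg (by linarith) hI.le
      show u + γ * WW j (α * y + β) ≤ u + γ * WW j (α * x + β)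
      nlinarith
end
end
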